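/- If a Schauder basis B of a Banach space X has Property (Q*) with constant C, then B is C²-greedy: ‖x − G_m(x)‖ ≤ C²·σ_m(x) for all x ∈ X and all m ∈ ℕ, where σ_m(x) = inf{ ‖x − b‖ : b ∈ span{e_n : n ∈ A}, |A| = m }. -/

import Mathlib

open Filter

/-- The vector with finitely many coefficients `c` with respect to the sequence `(e_n)`. -/
noncomputable def vec {X : Type*} [NormedAddCommGroup X] [NormedSpace ℝ X]
    (e : ℕ → X) (c : ℕ →₀ ℝ) : X := ∑ n ∈ c.support, c n • e n

/-- Property (Q*) with constant `C`. -/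
def PropQstar {X : Type*} [NormedAddCommGroup X] [NormedSpace ℝ X] (e : ℕ → X) (C : ℝ) : Prop :=
  ∀ (c z y : ℕ →₀ ℝ), Disjoint c.support z.support → Disjoint c.support y.support →
    Disjoint z.support y.support → (∀ n, |c n| ≤ 1) → (∀ n, |z n| ≤ 1) →
    z.support.card ≤ (y.support.filter fun n => |y n| = 1).card →
    ‖vec e c + vec e z‖ ≤ C * ‖vec e c + vec e y‖

/-- `Λ` is the set of indices of the `|Λ|` largest-in-modulus coefficients of `x`, ties
broken by smallest index (the natural greedy ordering). -/
def IsGreedySet {X : Type*} [NormedAddCommGroup X] [NormedSpace ℝ X]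
    (f : ℕ → X →L[ℝ] ℝ) (x : X) (Λ : Finset ℕ) : Prop :=
  ∀ n ∈ Λ, ∀ k ∉ Λ, |f k x| < |f n x| ∨ (|f k x| = |f n x| ∧ n < k)

/-! Pass to the partial sums `x_N` and compare `x_N - G(x_N)` with `x_N - b`, where `b` is
supported on a set `A` with `|A| = |Λ|`. Let `t` be the largest modulus of a coefficient of `x_N`
off `Λ`, so `t` is at most every modulus on `Λ`. Property (Q*) trades the coefficients of `x_N` on
`A \ Λ` (all of modulus `≤ t`) for coefficients of modulus exactly `t` on `Λ \ A`, at the cost of a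
factor `C`; choosing them with the signs of `x_N` puts the resulting vector in the box
`{∑ θ_n (x_N - b)_n e_n : 0 ≤ θ_n ≤ 1}`. By convexity of the norm its norm is at most that of a
coordinate projection of `x_N - b`, and Property (Q*) with `z = 0` bounds such a projection by
`C ‖x_N - b‖`. -/

open Finset

theorem le_sq_mul_of_le_mul_of_le_mul {a b c C : ℝ} (hb : 0 ≤ b) (hc : 0 ≤ c)
    (hab : a ≤ C * b) (hbc : b ≤ C * c) : a ≤ C ^ 2 * c := by
  rcases le_total 0 C with hC | hC
  · nlinarith [mul_le_mul_of_nonneg_left hbc hC]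
  · nlinarith [mul_nonpos_of_nonpos_of_nonneg hC hb]

theorem le_mul_csInf {s : Set ℝ} (hs : s.Nonempty) {a k : ℝ} (hk : 0 ≤ k)
    (h : ∀ d ∈ s, a ≤ k * d) : a ≤ k * sInf s := by
  rw [← smul_eq_mul, ← Real.sInf_smul_of_nonneg hk]
  exact le_csInf (hs.image _) (by rintro _ ⟨d, hd, rfl⟩; exact h d hd)

theorem exists_threshold {ι : Type*} {a : ι → ℝ} {Λ R : Finset ι}
    (h : ∀ n ∈ Λ, ∀ k ∈ R, |a k| ≤ |a n|) :
    ∃ t : ℝ, 0 ≤ t ∧ (∀ k ∈ R, |a k| ≤ t) ∧ ∀ n ∈ Λ, t ≤ |a n| := by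
  refine ⟨(R.sup (‖a ·‖₊) : NNReal), NNReal.coe_nonneg _, fun k hk => ?_, fun n hn => ?_⟩
  · simpa using NNReal.coe_le_coe.mpr (le_sup (f := (‖a ·‖₊)) hk)
  · simpa using NNReal.coe_le_coe.mpr (Finset.sup_le fun k hk =>
      (show ‖a k‖₊ ≤ ‖a n‖₊ by simpa [← NNReal.coe_le_coe] using h n hn k hk))

section
variable {X : Type*} [NormedAddCommGroup X] [NormedSpace ℝ X]

theorem norm_add_smul_le_max (u v : X) {θ : ℝ} (hθ : θ ∈ Set.Icc (0 : ℝ) 1) :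
    ‖u + θ • v‖ ≤ max ‖u‖ ‖u + v‖ :=
  (convexOn_norm convex_univ).le_on_segment trivial trivial <| by
    rw [segment_eq_image']
    exact ⟨θ, hθ, by rw [add_sub_cancel_left]⟩

theorem exists_subset_norm_add_sum_smul_le {ι : Type*} [DecidableEq ι] (v : ι → X) {θ : ι → ℝ}
    {F : Finset ι} (hθ : ∀ n ∈ F, θ n ∈ Set.Icc (0 : ℝ) 1) (w : X) :
    ∃ S ⊆ F, ‖w + ∑ n ∈ F, θ n • v n‖ ≤ ‖w + ∑ n ∈ S, v n‖ := by
  induction F using Finset.induction_on generalizing w with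
  | empty => exact ⟨∅, subset_rfl, le_rfl⟩
  | @insert a F ha ih =>
    have hθF : ∀ n ∈ F, θ n ∈ Set.Icc (0 : ℝ) 1 := fun n hn => hθ n (mem_insert_of_mem hn)
    have hvertex :=
      norm_add_smul_le_max (w + ∑ n ∈ F, θ n • v n) (v a) (hθ a (mem_insert_self a F))
    rw [sum_insert ha, add_left_comm, add_comm]
    rcases le_total ‖w + ∑ n ∈ F, θ n • v n‖ ‖w + ∑ n ∈ F, θ n • v n + v a‖ with h | h
    · obtain ⟨S, hSF, hS⟩ := ih hθF (w + v a)
      refine ⟨insert a S, insert_subset_insert a hSF, ?_⟩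
      rw [sum_insert fun haS => ha (hSF haS), ← add_assoc]
      calc _ ≤ _ := hvertex.trans (max_eq_right h).le
        _ = ‖w + v a + ∑ n ∈ F, θ n • v n‖ := by rw [add_right_comm]
        _ ≤ _ := hS
    · obtain ⟨S, hSF, hS⟩ := ih hθF w
      exact ⟨S, hSF.trans (subset_insert a F), (hvertex.trans (max_eq_left h).le).trans hS⟩

variable (e : ℕ → X)

theorem vec_indicator (s : Finset ℕ) (c : ℕ → ℝ) :
    vec e (Finsupp.indicator s fun n _ => c n) = ∑ n ∈ s, c n • e n := by
  rw [vec, sum_subset (Finsupp.support_indicator_subset _ _)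
    fun n _ hn => by rw [Finsupp.notMem_support_iff.mp hn, zero_smul]]
  exact sum_congr rfl fun n hn => by rw [Finsupp.indicator_apply, dif_pos hn]

variable {e} {C : ℝ}

theorem PropQstar.norm_add_sum_le (hQ : PropQstar e C) {S T U : Finset ℕ}
    (hST : Disjoint S T) (hSU : Disjoint S U) (hTU : Disjoint T U) {c z y : ℕ → ℝ} {t : ℝ}
    (ht : 0 < t) (hc : ∀ n ∈ S, |c n| ≤ t) (hz : ∀ n ∈ T, |z n| ≤ t)
    (hy : #T ≤ #{n ∈ U | |y n| = t}) :
    ‖∑ n ∈ S, c n • e n + ∑ n ∈ T, z n • e n‖ ≤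
      C * ‖∑ n ∈ S, c n • e n + ∑ n ∈ U, y n • e n‖ := by
  let scaled (s : Finset ℕ) (g : ℕ → ℝ) : ℕ →₀ ℝ := Finsupp.indicator s fun n _ => t⁻¹ * g n
  have hsupp (s : Finset ℕ) (g : ℕ → ℝ) : (scaled s g).support ⊆ s :=
    Finsupp.support_indicator_subset _ _
  have hle (s : Finset ℕ) (g : ℕ → ℝ) (hg : ∀ n ∈ s, |g n| ≤ t) (n : ℕ) :
      |scaled s g n| ≤ 1 := by
    simp only [scaled, Finsupp.indicator_apply]
    split_ifs with hn
    · rw [abs_mul, abs_inv, abs_of_pos ht, inv_mul_le_one₀ ht]; exact hg n hn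
    · simp
  have hvec (s : Finset ℕ) (g : ℕ → ℝ) : vec e (scaled s g) = t⁻¹ • ∑ n ∈ s, g n • e n := by
    simp only [scaled, vec_indicator, smul_sum, mul_smul]
  have hcard : #(scaled T z).support ≤ #{n ∈ (scaled U y).support | |scaled U y n| = 1} := by
    refine (card_le_card (hsupp T z)).trans (hy.trans (card_le_card fun n hn => ?_))
    simp only [mem_filter] at hn ⊢
    have hval : scaled U y n = t⁻¹ * y n := by simp [scaled, Finsupp.indicator_apply, hn.1]
    have hone : |scaled U y n| = 1 := by
      rw [hval, abs_mul, abs_inv, abs_of_pos ht, hn.2, inv_mul_cancel₀ ht.ne']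
    exact ⟨Finsupp.mem_support_iff.mpr fun h => by simp [h] at hone, hone⟩
  have key := hQ (scaled S c) (scaled T z) (scaled U y) (hST.mono (hsupp S c) (hsupp T z))
    (hSU.mono (hsupp S c) (hsupp U y)) (hTU.mono (hsupp T z) (hsupp U y)) (hle S c hc)
    (hle T z hz) hcard
  rwa [hvec, hvec, hvec, ← smul_add, ← smul_add, norm_smul, norm_smul, ← mul_left_comm,
    mul_le_mul_iff_right₀ (norm_pos_iff.mpr (inv_ne_zero ht.ne'))] at key

theorem PropQstar.norm_sum_le_of_subset (hQ : PropQstar e C) (g : ℕ → ℝ) {S F : Finset ℕ}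
    (hSF : S ⊆ F) : ‖∑ n ∈ S, g n • e n‖ ≤ C * ‖∑ n ∈ F, g n • e n‖ := by
  have hM : 0 < ∑ n ∈ S, |g n| + 1 := by positivity
  have hg : ∀ n ∈ S, |g n| ≤ ∑ n ∈ S, |g n| + 1 := fun n hn =>
    (single_le_sum (fun k _ => abs_nonneg (g k)) hn).trans (le_add_of_nonneg_right zero_le_one)
  have key := hQ.norm_add_sum_le (T := ∅) (U := F \ S) (z := g) (y := g)
    (disjoint_empty_right _) disjoint_sdiff (disjoint_empty_left _) hM hg (by simp) (by simp)
  rwa [sum_empty, add_zero, add_comm, sum_sdiff hSF] at key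

theorem PropQstar.norm_sum_sdiff_le_mul_norm_sum_smul (hQ : PropQstar e C)
    {F A Λ : Finset ℕ} {a l θ : ℕ → ℝ} (hAF : A ⊆ F) (hl : ∀ n ∉ A, l n = 0) (hcard : #A = #Λ)
    {t : ℝ} (ht : 0 < t) (hout : ∀ k ∈ F \ Λ, |a k| ≤ t) (hθ_out : ∀ n ∉ Λ, θ n = 1)
    (hθ_in : ∀ n ∈ Λ, |θ n * a n| = t) :
    ‖∑ n ∈ F \ Λ, a n • e n‖ ≤
      C * ‖∑ n ∈ F \ (A ∪ Λ) ∪ Λ \ A, (θ n * (a n - l n)) • e n‖ := by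
  have hS : ∀ n ∈ F \ (A ∪ Λ), θ n * (a n - l n) = a n := fun n hn => by
    rw [hθ_out n (by grind), hl n (by grind), sub_zero, one_mul]
  have hU : ∀ n ∈ Λ \ A, |θ n * (a n - l n)| = t := fun n hn => by
    rw [hl n (by grind), sub_zero, hθ_in n (by grind)]
  have key := hQ.norm_add_sum_le (S := F \ (A ∪ Λ)) (T := A \ Λ) (U := Λ \ A) (z := a)
    (c := fun n => θ n * (a n - l n)) (y := fun n => θ n * (a n - l n))
    (by grind [disjoint_left]) (by grind [disjoint_left]) (by grind [disjoint_left]) ht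
    (fun n hn => by rw [hS n hn]; exact hout n (by grind)) (fun n hn => hout n (by grind))
    (by rw [filter_true_of_mem hU]; exact (card_sdiff_comm hcard).le)
  have hFΛ : F \ Λ = F \ (A ∪ Λ) ∪ A \ Λ := by grind
  rwa [← sum_union (by grind [disjoint_left]), sum_congr rfl fun n hn => by rw [hS n hn],
    ← sum_union (by grind [disjoint_left]), ← hFΛ] at key

theorem PropQstar.norm_sum_sdiff_le (hQ : PropQstar e C) {F A Λ : Finset ℕ} {a l : ℕ → ℝ}
    (hAF : A ⊆ F) (hΛF : Λ ⊆ F) (hl : ∀ n ∉ A, l n = 0) (hcard : #A = #Λ)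
    (hgr : ∀ n ∈ Λ, ∀ k ∈ F \ Λ, |a k| ≤ |a n|) :
    ‖∑ n ∈ F \ Λ, a n • e n‖ ≤ C ^ 2 * ‖∑ n ∈ F, (a n - l n) • e n‖ := by
  obtain ⟨t, ht0, hout, hin⟩ := exists_threshold hgr
  rcases ht0.eq_or_lt with ht | ht
  · have hzero : ∑ n ∈ F \ Λ, a n • e n = 0 := sum_eq_zero fun k hk => by
      rw [abs_nonpos_iff.mp ((hout k hk).trans ht.ge), zero_smul]
    rw [hzero, norm_zero]
    positivity
  let θ (n : ℕ) : ℝ := if n ∈ Λ then t / |a n| else 1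
  have hθ : ∀ n, θ n ∈ Set.Icc (0 : ℝ) 1 := fun n => by
    by_cases hn : n ∈ Λ
    · simp only [θ, if_pos hn]
      exact ⟨by positivity, div_le_one_of_le₀ (hin n hn) (abs_nonneg _)⟩
    · simp [θ, hn]
  have hθ_in : ∀ n ∈ Λ, |θ n * a n| = t := fun n hn => by
    have hpos : 0 < |a n| := ht.trans_le (hin n hn)
    simp only [θ, if_pos hn, abs_mul, abs_div, abs_abs, abs_of_pos ht]
    field_simp
  have hbox := hQ.norm_sum_sdiff_le_mul_norm_sum_smul hAF hl hcard ht hout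
    (fun n hn => if_neg hn) hθ_in
  obtain ⟨S, hSU, hS⟩ := exists_subset_norm_add_sum_smul_le (fun n => (a n - l n) • e n)
    (F := F \ (A ∪ Λ) ∪ Λ \ A) (fun n _ => hθ n) 0
  simp only [zero_add, smul_smul] at hS
  have hSF : S ⊆ F := hSU.trans (union_subset sdiff_subset (sdiff_subset.trans hΛF))
  exact le_sq_mul_of_le_mul_of_le_mul (norm_nonneg _) (norm_nonneg _) hbox
    (hS.trans (hQ.norm_sum_le_of_subset _ hSF))

theorem PropQstar.norm_sub_sum_le_of_mem_span (hQ : PropQstar e C) {c : ℕ → ℝ} {x : X}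
    (hx : Tendsto (fun N => ∑ n ∈ range N, c n • e n) atTop (nhds x)) {Λ A : Finset ℕ}
    (hgr : ∀ n ∈ Λ, ∀ k ∉ Λ, |c k| ≤ |c n|) (hcard : #A = #Λ) {b : X}
    (hb : b ∈ Submodule.span ℝ (e '' (A : Set ℕ))) :
    ‖x - ∑ n ∈ Λ, c n • e n‖ ≤ C ^ 2 * ‖x - b‖ := by
  obtain ⟨l, hlA, rfl⟩ := (Finsupp.mem_span_image_iff_linearCombination ℝ).mp hb
  obtain ⟨N₀, hN₀⟩ := (A ∪ Λ).exists_nat_subset_range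
  have hev : ∀ᶠ N in atTop, ‖∑ n ∈ range N, c n • e n - ∑ n ∈ Λ, c n • e n‖ ≤
      C ^ 2 * ‖∑ n ∈ range N, c n • e n - Finsupp.linearCombination ℝ e l‖ := by
    filter_upwards [eventually_ge_atTop N₀] with N hN
    have hAΛ : A ∪ Λ ⊆ range N := hN₀.trans (range_subset_range.mpr hN)
    have hb : Finsupp.linearCombination ℝ e l = ∑ n ∈ range N, l n • e n :=
      Finsupp.sum_of_support_subset _
        ((coe_subset.mp ((Finsupp.mem_supported ℝ l).mp hlA)).trans (union_subset_left hAΛ))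
        _ fun _ _ => zero_smul ℝ _
    rw [← sum_sdiff_eq_sub (union_subset_right hAΛ), hb, ← sum_sub_distrib]
    simp_rw [← sub_smul]
    exact hQ.norm_sum_sdiff_le (union_subset_left hAΛ) (union_subset_right hAΛ)
      (fun n hn => (Finsupp.mem_supported' ℝ l).mp hlA n hn) hcard
      fun n hn k hk => hgr n hn k (Finset.mem_sdiff.mp hk).2
  exact le_of_tendsto_of_tendsto (hx.sub_const _).norm ((hx.sub_const _).norm.const_mul _) hev

theorem IsGreedySet.abs_le {f : ℕ → X →L[ℝ] ℝ} {x : X} {Λ : Finset ℕ} (h : IsGreedySet f x Λ) :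
    ∀ n ∈ Λ, ∀ k ∉ Λ, |f k x| ≤ |f n x| := fun n hn k hk =>
  (h n hn k hk).elim le_of_lt fun h => h.1.le

end

theorem stmt_18_general {X : Type*} [NormedAddCommGroup X] [NormedSpace ℝ X]
    (e : ℕ → X) (f : ℕ → X →L[ℝ] ℝ)
    (hexp : ∀ z : X, Tendsto (fun N => ∑ n ∈ Finset.range N, f n z • e n) atTop (nhds z))
    (C : ℝ) (hQ : PropQstar e C) :
    ∀ (x : X) (m : ℕ) (Λ : Finset ℕ), Λ.card = m → IsGreedySet f x Λ →
      ‖x - ∑ n ∈ Λ, f n x • e n‖ ≤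
        C ^ 2 * sInf {d : ℝ | ∃ (A : Finset ℕ) (b : X), A.card = m ∧
          b ∈ Submodule.span ℝ (e '' (A : Set ℕ)) ∧ d = ‖x - b‖} := by
  intro x m Λ hΛ hgr
  refine le_mul_csInf ?_ (sq_nonneg C) ?_
  · exact ⟨‖x‖, range m, 0, card_range m, zero_mem _, by rw [sub_zero]⟩
  · rintro _ ⟨A, b, hA, hb, rfl⟩
    exact hQ.norm_sub_sum_le_of_mem_span (hexp x) hgr.abs_le (hA.trans hΛ.symm) hb

/-- Theorem 3.6 (ii): if the basis has Property (Q*) with constant `C`, then it is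
`C²`-greedy: `‖x - G_m(x)‖ ≤ C² σ_m(x)` for all `x` and `m`, where
`σ_m(x) = inf {‖x - b‖ : b ∈ span{e_n : n ∈ A}, |A| = m}`. -/
theorem stmt_18 {X : Type*} [NormedAddCommGroup X] [NormedSpace ℝ X] [CompleteSpace X]
    (e : ℕ → X) (f : ℕ → X →L[ℝ] ℝ)
    (hbi : ∀ m n : ℕ, f m (e n) = if m = n then 1 else 0)
    (hexp : ∀ z : X, Tendsto (fun N => ∑ n ∈ Finset.range N, f n z • e n) atTop (nhds z))
    (C : ℝ) (hQ : PropQstar e C) :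
    ∀ (x : X) (m : ℕ) (Λ : Finset ℕ), Λ.card = m → IsGreedySet f x Λ →
      ‖x - ∑ n ∈ Λ, f n x • e n‖ ≤
        C ^ 2 * sInf {d : ℝ | ∃ (A : Finset ℕ) (b : X), A.card = m ∧
          b ∈ Submodule.span ℝ (e '' (A : Set ℕ)) ∧ d = ‖x - b‖} :=
  stmt_18_general e f hexp C hQ
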